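/- arXiv:math/9608206 — 2 statements merged into one kernel-verified Lean document; each statement's English description precedes it below -/
import Mathlib

section
/- Let G be a group in which the centralizer of every nontrivial element is infinite cyclic, and suppose moreover that for every nontrivial x and every nonzero integer n, the centralizer of x^n equals the centralizer of x. If x is a nontrivial element of G and k x k^{-1} = x^n for some k in G and some integer n, then n = 1 or n = -1. -/
/-! Conjugation by `k` carries `C(x)` onto `C(k x k⁻¹) = C(xⁿ) = C(x)`, so it restricts to an
automorphism of `C(x) ≅ ℤ` sending `x` to `xⁿ`. Every automorphism of `ℤ` is multiplication by a
unit, so `n = ±1`. -/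

theorem Int.eq_one_or_neg_one_of_addEquiv_apply_eq_mul (α : ℤ ≃+ ℤ) {t n : ℤ} (ht : t ≠ 0)
    (h : α t = n * t) : n = 1 ∨ n = -1 := by
  have hmul : ∀ a, α a = a * α 1 := fun a => by simpa using map_zsmul α a 1
  have hunit : IsUnit (α 1) :=
    IsUnit.of_mul_eq_one (α.symm 1) (by rw [mul_comm, ← hmul, α.apply_symm_apply])
  have hn : n = α 1 := mul_right_cancel₀ ht (by rw [← h, hmul, mul_comm])
  exact Int.isUnit_iff.mp (hn ▸ hunit)

theorem MulEquiv.eq_one_or_neg_one_of_apply_eq_zpow {C : Type*} [Group C]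
    (e : C ≃* Multiplicative ℤ) (φ : C ≃* C) {t : C} (ht : t ≠ 1) {n : ℤ}
    (h : φ t = t ^ n) : n = 1 ∨ n = -1 :=
  Int.eq_one_or_neg_one_of_addEquiv_apply_eq_mul
    (AddEquiv.toMultiplicative.symm (e.symm.trans (φ.trans e)))
    (t := (e t).toAdd) (by simpa using ht) (by simp [h])

theorem Subgroup.map_equiv_centralizer {G G' : Type*} [Group G] [Group G'] (σ : G ≃* G')
    (s : Set G) : (centralizer s).map (σ : G →* G') = centralizer (σ '' s) := by
  ext y
  rw [map_equiv_eq_comap_symm]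
  simp only [mem_comap, mem_centralizer_iff, Set.forall_mem_image]
  refine forall₂_congr fun h _ => ?_
  simp [← σ.injective.eq_iff]

theorem no_conjugate_to_proper_power
    {G : Type*} [Group G]
    (hcent : ∀ x : G, x ≠ 1 → Nonempty (Subgroup.centralizer {x} ≃* Multiplicative ℤ))
    (hstab : ∀ x : G, x ≠ 1 → ∀ n : ℤ, n ≠ 0 →
      Subgroup.centralizer {x ^ n} = Subgroup.centralizer {x})
    (x : G) (hx : x ≠ 1) (k : G) (n : ℤ) (h : k * x * k⁻¹ = x ^ n) :
    n = 1 ∨ n = -1 := by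
  have hn : n ≠ 0 := by
    rintro rfl
    exact hx (conj_eq_one_iff.mp (h.trans (zpow_zero x)))
  have hinv : (Subgroup.centralizer {x}).map (MulAut.conj k : G →* G) =
      Subgroup.centralizer {x} := by
    rw [Subgroup.map_equiv_centralizer, Set.image_singleton, MulAut.conj_apply, h,
      hstab x hx n hn]
  let φ : Subgroup.centralizer {x} ≃* Subgroup.centralizer {x} :=
    ((MulAut.conj k).subgroupMap _).trans (MulEquiv.subgroupCongr hinv)
  obtain ⟨e⟩ := hcent x hx
  refine e.eq_one_or_neg_one_of_apply_eq_zpow φ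
    (t := ⟨x, Subgroup.mem_centralizer_singleton_iff.mpr rfl⟩) (by simpa using hx) ?_
  ext
  simpa [φ] using h
end

section
/- Let p : Y → Z be a continuous locally injective map between Hausdorff topological spaces, and let K be a compact subset of Y. Then the set Σ = { z ∈ K : there exists y ∈ K with y ≠ z and p(y) = p(z) } is a closed subset of K. -/
theorem doubled_points_closed_of_locally_injective
    {Y Z : Type*} [TopologicalSpace Y] [TopologicalSpace Z]
    [T2Space Y] [T2Space Z]
    (p : Y → Z) (hp : Continuous p)
    (hloc : ∀ y : Y, ∃ U ∈ nhds y, Set.InjOn p U)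
    (K : Set Y) (hK : IsCompact K) :
    IsClosed {z ∈ K | ∃ y ∈ K, y ≠ z ∧ p y = p z} := by
  set D : Set (Y × Y) :=
    {q | q.1 ∈ K ∧ q.2 ∈ K ∧ q.1 ≠ q.2 ∧ p q.1 = p q.2} with hD
  -- D is closed (its closure is contained in D)
  have hDclosed : closure D ⊆ D := by
    intro q hq
    -- closure of D is contained in the closed set K×K ∩ {p∘fst = p∘snd}
    have hS : closure D ⊆ {q : Y × Y | q.1 ∈ K ∧ q.2 ∈ K ∧ p q.1 = p q.2} := by
      apply closure_minimal
      · intro q hq; exact ⟨hq.1, hq.2.1, hq.2.2.2⟩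
      · simp only [Set.setOf_and]
        exact IsClosed.inter (hK.isClosed.preimage continuous_fst)
          (IsClosed.inter (hK.isClosed.preimage continuous_snd)
            (isClosed_eq (hp.comp continuous_fst) (hp.comp continuous_snd)))
    obtain ⟨h1, h2, h3⟩ := hS hq
    refine ⟨h1, h2, ?_, h3⟩
    intro hne
    obtain ⟨U, hU, hUinj⟩ := hloc q.1
    have hUU : (U ×ˢ U : Set (Y × Y)) ∈ nhds q := by
      rw [nhds_prod_eq, ← hne]
      exact Filter.prod_mem_prod hU hU
    obtain ⟨a, haU, haD⟩ := (mem_closure_iff_nhds.mp hq) _ hUU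
    exact haD.2.2.1 (hUinj haU.1 haU.2 haD.2.2.2)
  have hDclosed' : IsClosed D := isClosed_of_closure_subset hDclosed
  have hDcompact : IsCompact D := by
    have : D ⊆ K ×ˢ K := fun q hq => ⟨hq.1, hq.2.1⟩
    exact (hK.prod hK).of_isClosed_subset hDclosed' this
  have himg : {z ∈ K | ∃ y ∈ K, y ≠ z ∧ p y = p z} = Prod.snd '' D := by
    ext z
    constructor
    · rintro ⟨hz, y, hy, hne, hpy⟩
      exact ⟨(y, z), ⟨hy, hz, hne, hpy⟩, rfl⟩
    · rintro ⟨⟨y, z'⟩, ⟨hy, hz, hne, hpy⟩, rfl⟩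
      exact ⟨hz, y, hy, hne, hpy⟩
  rw [himg]
  exact (hDcompact.image continuous_snd).isClosed
end
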